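/- Let G be an effective ample Hausdorff groupoid (i.e., Iso(G)° = G⁽⁰⁾). Then the diagonal A_R(G⁽⁰⁾) is a maximal commutative subalgebra of the Steinberg algebra A_R(G). -/
import Mathlib


open CategoryTheory

abbrev GE (C : Type*) [Groupoid C] := Σ a b : C, a ⟶ b

namespace GE

variable {C : Type*} [Groupoid C]

def srcU (g : GE C) : GE C := ⟨g.1, g.1, 𝟙 g.1⟩
def ranU (g : GE C) : GE C := ⟨g.2.1, g.2.1, 𝟙 g.2.1⟩
def unitSpace (C : Type*) [Groupoid C] : Set (GE C) := {g | ∃ a : C, g = ⟨a, a, 𝟙 a⟩}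
def isoSet (C : Type*) [Groupoid C] : Set (GE C) := {g | srcU g = ranU g}
def gmul (g₁ g₂ : GE C) (h : g₂.2.1 = g₁.1) : GE C :=
  ⟨g₂.1, g₁.2.1, g₂.2.2 ≫ eqToHom h ≫ g₁.2.2⟩
def ginv (g : GE C) : GE C := ⟨g.2.1, g.1, Groupoid.inv g.2.2⟩
def setMul (U V : Set (GE C)) : Set (GE C) :=
  {x | ∃ g₁ ∈ U, ∃ g₂ ∈ V, ∃ h : g₂.2.1 = g₁.1, x = gmul g₁ g₂ h}
def IsBisection (V : Set (GE C)) : Prop := Set.InjOn srcU V ∧ Set.InjOn ranU V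

section Top

variable [TopologicalSpace (GE C)]

/-- `G` is a topological groupoid: inversion and composition are continuous. -/
def IsTopologicalGroupoid (C : Type*) [Groupoid C] [TopologicalSpace (GE C)] : Prop :=
  Continuous (fun g : GE C => ginv g) ∧
    Continuous (fun p : {p : GE C × GE C // p.2.2.1 = p.1.1} => gmul p.1.1 p.1.2 p.2)

/-- A compact open bisection. -/
def IsCompactOpenBisection (V : Set (GE C)) : Prop :=
  IsCompact V ∧ IsOpen V ∧ IsBisection V

/-- `G` is ample: étale (the source map is a local homeomorphism) with a basis of
compact open bisections. -/
def IsAmple (C : Type*) [Groupoid C] [TopologicalSpace (GE C)] : Prop :=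
  IsLocalHomeomorph (fun g : GE C => srcU g) ∧
    TopologicalSpace.IsTopologicalBasis {V : Set (GE C) | IsCompactOpenBisection V}

variable (R : Type*) [CommRing R]

/-- The Steinberg algebra carrier: locally constant compactly supported functions. -/
def steinbergSet (C : Type*) [Groupoid C] [TopologicalSpace (GE C)] (R : Type*) [CommRing R] :
    Set (GE C → R) :=
  {f | IsLocallyConstant f ∧ HasCompactSupport f}

/-- Convolution: `(f * g)(x) = ∑_{x = g₁ g₂} f(g₁) g(g₂)`. -/
noncomputable def conv (f g : GE C → R) : GE C → R := fun x =>
  ∑ᶠ p ∈ {p : GE C × GE C | ∃ h : p.2.2.1 = p.1.1, gmul p.1 p.2 h = x}, f p.1 * g p.2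

/-- The subalgebra `A_R(S)` of Steinberg functions supported in a subset `S` of arrows. -/
def AOf (S : Set (GE C)) : Set (GE C → R) :=
  {f | f ∈ steinbergSet C R ∧ Function.support f ⊆ S}

/-- A subset `U` of the unit space is invariant if `s(g) ∈ U ↔ r(g) ∈ U`. -/
def IsInvariant (U : Set (GE C)) : Prop := ∀ g : GE C, srcU g ∈ U ↔ ranU g ∈ U

end Top

end GE

namespace GE

variable {C : Type*} [Groupoid C]

lemma gmul_unit_right' (p₁ p₂ : GE C) (hu : p₂ ∈ unitSpace C) (h : p₂.2.1 = p₁.1) :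
    gmul p₁ p₂ h = p₁ ∧ p₂ = srcU p₁ := by
  obtain ⟨a, rfl⟩ := hu
  obtain ⟨b, c, φ⟩ := p₁
  obtain rfl : a = b := h
  simp [gmul, srcU]

lemma gmul_unit_left' (p₁ p₂ : GE C) (hu : p₁ ∈ unitSpace C) (h : p₂.2.1 = p₁.1) :
    gmul p₁ p₂ h = p₂ ∧ p₁ = ranU p₂ := by
  obtain ⟨a, rfl⟩ := hu
  obtain ⟨b, c, φ⟩ := p₂
  obtain rfl : c = a := h
  simp [gmul, ranU]

lemma gmul_self_src' (x : GE C) : ∃ h : (srcU x).2.1 = x.1, gmul x (srcU x) h = x := by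
  obtain ⟨a, b, φ⟩ := x
  exact ⟨rfl, by simp [gmul, srcU]⟩

lemma gmul_self_ran' (x : GE C) : ∃ h : x.2.1 = (ranU x).1, gmul (ranU x) x h = x := by
  obtain ⟨a, b, φ⟩ := x
  exact ⟨rfl, by simp [gmul, ranU]⟩

lemma srcU_of_unit {x : GE C} (hx : x ∈ unitSpace C) : srcU x = x := by
  obtain ⟨a, rfl⟩ := hx; rfl

lemma ranU_of_unit {x : GE C} (hx : x ∈ unitSpace C) : ranU x = x := by
  obtain ⟨a, rfl⟩ := hx; rfl

lemma srcU_mem_unit (x : GE C) : srcU x ∈ unitSpace C := ⟨x.1, rfl⟩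

variable [TopologicalSpace (GE C)] (R : Type*) [CommRing R]

lemma conv_unit_right' (f g : GE C → R) (hg : Function.support g ⊆ unitSpace C) (x : GE C) :
    conv R f g x = f x * g (srcU x) := by
  unfold conv
  rw [finsum_mem_def]
  have hmem : ((x, srcU x) : GE C × GE C) ∈
      {p : GE C × GE C | ∃ h : p.2.2.1 = p.1.1, gmul p.1 p.2 h = x} := gmul_self_src' x
  rw [finsum_eq_single _ ((x, srcU x) : GE C × GE C), Set.indicator_of_mem hmem]
  intro p hp
  by_cases hps : p ∈ {p : GE C × GE C | ∃ h : p.2.2.1 = p.1.1, gmul p.1 p.2 h = x}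
  · rw [Set.indicator_of_mem hps]
    by_cases hg2 : g p.2 = 0
    · rw [hg2, mul_zero]
    · exfalso
      obtain ⟨h, hx⟩ := hps
      obtain ⟨h1, h2⟩ := gmul_unit_right' p.1 p.2 (hg hg2) h
      rw [hx] at h1
      exact hp (Prod.ext h1.symm (h2.trans (congrArg srcU h1.symm)))
  · rw [Set.indicator_of_notMem hps]

lemma conv_unit_left' (f g : GE C → R) (hg : Function.support g ⊆ unitSpace C) (x : GE C) :
    conv R g f x = g (ranU x) * f x := by
  unfold conv
  rw [finsum_mem_def]
  have hmem : ((ranU x, x) : GE C × GE C) ∈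
      {p : GE C × GE C | ∃ h : p.2.2.1 = p.1.1, gmul p.1 p.2 h = x} := gmul_self_ran' x
  rw [finsum_eq_single _ ((ranU x, x) : GE C × GE C), Set.indicator_of_mem hmem]
  intro p hp
  by_cases hps : p ∈ {p : GE C × GE C | ∃ h : p.2.2.1 = p.1.1, gmul p.1 p.2 h = x}
  · rw [Set.indicator_of_mem hps]
    by_cases hg1 : g p.1 = 0
    · rw [hg1, zero_mul]
    · exfalso
      obtain ⟨h, hx⟩ := hps
      obtain ⟨h1, h2⟩ := gmul_unit_left' p.1 p.2 (hg hg1) h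
      rw [hx] at h1
      exact hp (Prod.ext (h2.trans (congrArg ranU h1.symm)) h1.symm)
  · rw [Set.indicator_of_notMem hps]

/-- If both functions are supported on the unit space, convolutions commute. -/
lemma conv_comm_of_unit (f g : GE C → R) (hf : Function.support f ⊆ unitSpace C)
    (hg : Function.support g ⊆ unitSpace C) : conv R f g = conv R g f := by
  funext x
  rw [conv_unit_right' R f g hg x, conv_unit_left' R f g hg x]
  by_cases hfx : f x = 0
  · rw [hfx, zero_mul, mul_zero]
  · have hx : x ∈ unitSpace C := hf hfx
    rw [srcU_of_unit hx, ranU_of_unit hx, mul_comm]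

end GE

/-- If `G` is effective (`Iso(G)° = G⁽⁰⁾`), then the diagonal `A_R(G⁽⁰⁾)` is a maximal
commutative subalgebra of `A_R(G)`: it is commutative and equals its own centraliser. -/
theorem diagonal_maximal_commutative_of_effective {C : Type*} [Groupoid C]
    [TopologicalSpace (GE C)] [T2Space (GE C)] [LocallyCompactSpace (GE C)]
    (htg : GE.IsTopologicalGroupoid C) (ham : GE.IsAmple C)
    (heff : interior (GE.isoSet C) = GE.unitSpace C)
    (R : Type*) [CommRing R] :
    (∀ f ∈ GE.AOf (C := C) R (GE.unitSpace C), ∀ g ∈ GE.AOf (C := C) R (GE.unitSpace C),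
        GE.conv R f g = GE.conv R g f) ∧
      {f : GE C → R | f ∈ GE.steinbergSet C R ∧
          ∀ g ∈ GE.AOf R (GE.unitSpace C), GE.conv R f g = GE.conv R g f} =
        GE.AOf R (GE.unitSpace C) := by
  have hUopen : IsOpen (GE.unitSpace C) := heff ▸ isOpen_interior
  constructor
  · exact fun f hf g hg => GE.conv_comm_of_unit R f g hf.2 hg.2
  · ext f
    simp only [Set.mem_setOf_eq]
    constructor
    · rintro ⟨hst, hcomm⟩
      refine ⟨hst, ?_⟩
      -- first show the support is contained in the isotropy set
      have hiso : Function.support f ⊆ GE.isoSet C := by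
        intro y hy
        by_contra hne
        have hne' : GE.srcU y ≠ GE.ranU y := hne
        -- find a compact open bisection separating srcU y from ranU y
        have hUopen' : IsOpen (GE.unitSpace C \ {GE.ranU y}) :=
          hUopen.sdiff isClosed_singleton
        have hsrc : GE.srcU y ∈ GE.unitSpace C \ {GE.ranU y} :=
          ⟨GE.srcU_mem_unit y, by simpa using hne'⟩
        obtain ⟨V, hV, hyV, hVU⟩ := ham.2.exists_subset_of_mem_open hsrc hUopen'
        set g : GE C → R := Set.indicator V (fun _ => (1 : R)) with hgdef
        have hVclopen : IsClopen V := ⟨hV.1.isClosed, hV.2.1⟩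
        have hgsupp : Function.support g ⊆ GE.unitSpace C := by
          intro z hz
          have hzV : z ∈ V := by
            by_contra hzV
            exact hz (Set.indicator_of_notMem hzV _)
          exact (hVU hzV).1
        have hgloc : IsLocallyConstant g := by
          intro s
          classical
          have : g ⁻¹' s =
              (if (1 : R) ∈ s then V else ∅) ∪ (if (0 : R) ∈ s then Vᶜ else ∅) := by
            ext z
            by_cases hz : z ∈ V <;>
              simp [hgdef, Set.indicator, hz] <;> split_ifs <;> simp_all
          rw [this]
          split_ifs <;>
            simp [hVclopen.2, hVclopen.1.isOpen_compl, isOpen_empty, IsOpen.union]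
        have hgcpt : HasCompactSupport g :=
          HasCompactSupport.intro hV.1 fun z hz => Set.indicator_of_notMem hz _
        have hgA : g ∈ GE.AOf R (GE.unitSpace C) := ⟨⟨hgloc, hgcpt⟩, hgsupp⟩
        have := congrFun (hcomm g hgA) y
        rw [GE.conv_unit_right' R f g hgsupp y, GE.conv_unit_left' R f g hgsupp y] at this
        have h1 : g (GE.srcU y) = 1 := Set.indicator_of_mem hyV _
        have h0 : g (GE.ranU y) = 0 := by
          apply Set.indicator_of_notMem
          intro hmem
          exact (hVU hmem).2 rfl
        rw [h1, h0, mul_one, zero_mul] at this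
        exact hy this
      -- the support is open since f is locally constant
      have hopen : IsOpen (Function.support f) := by
        have : Function.support f = f ⁻¹' {0}ᶜ := by
          ext z; simp [Function.support]
        rw [this]
        exact hst.1 _
      calc Function.support f ⊆ interior (GE.isoSet C) := interior_maximal hiso hopen
        _ = GE.unitSpace C := heff
    · rintro ⟨hst, hsupp⟩
      exact ⟨hst, fun g hg => GE.conv_comm_of_unit R f g hsupp hg.2⟩
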